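/- Let S ⊂ ℝ³ be a C² surface, and γ : I → S a unit-speed curve lying on the unit sphere ∂B₁ such that at each point the unit normal ν of S is ε-close to being tangent to the sphere (|⟨ν, x⟩| ≤ ε at each x ∈ γ ⊂ ∂B₁) and the second fundamental form of S along γ satisfies |A| ≤ δ. Then the geodesic curvature of γ as a curve in ∂B₁ is bounded by C(ε + δ) for a universal constant C. -/

import Mathlib

/-!
Differentiating `‖γ‖² = 1` and `⟪γ', γ⟫ = 0` along the unit-speed curve shows that
`v = γ'' + γ` is orthogonal to both `γ` and `γ'`. In `ℝ³` the vectors orthogonal to this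
orthonormal pair form a line, and since `ν ⊥ γ'` with `|⟪ν, γ⟫| ≤ 1/2`, the component of `ν` along
that line is at least `√3/2`. Hence `‖v‖ ≤ 2 |⟪ν, v⟫| ≤ 2 (|⟪γ'', ν⟫| + |⟪γ, ν⟫|) ≤ 2 (δ + ε)`.
-/

open scoped RealInnerProductSpace

open Module

section LinearAlgebra

variable {E : Type*} [NormedAddCommGroup E] [InnerProductSpace ℝ E]

theorem Orthonormal.sum_sq_inner_eq_norm_sq_of_card_eq_finrank [FiniteDimensional ℝ E]
    {ι : Type*} [Fintype ι] {v : ι → E} (hv : Orthonormal ℝ v)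
    (hcard : Fintype.card ι = finrank ℝ E) (y : E) :
    ∑ i, ⟪v i, y⟫ ^ 2 = ‖y‖ ^ 2 :=
  have hspan := hv.linearIndependent.span_eq_top_of_card_eq_finrank' hcard
  OrthonormalBasis.coe_mk hv hspan.ge ▸ (OrthonormalBasis.mk hv hspan.ge).sum_sq_inner_right y

/-- In dimension three the orthogonal complement of an orthonormal pair is a line. -/
theorem inner_sq_eq_of_finrank_eq_three (hE : finrank ℝ E = 3) {x τ v : E}
    (hx : ‖x‖ = 1) (hτ : ‖τ‖ = 1) (hxτ : ⟪x, τ⟫ = 0) (hxv : ⟪x, v⟫ = 0) (hτv : ⟪τ, v⟫ = 0)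
    (y : E) : ⟪y, v⟫ ^ 2 = (‖y‖ ^ 2 - ⟪x, y⟫ ^ 2 - ⟪τ, y⟫ ^ 2) * ‖v‖ ^ 2 := by
  rcases eq_or_ne v 0 with rfl | hv
  · simp
  have : FiniteDimensional ℝ E := .of_finrank_pos (by omega)
  have hv' : ‖v‖ ≠ 0 := norm_ne_zero_iff.mpr hv
  set u := ‖v‖⁻¹ • v
  have hu : ‖u‖ = 1 := by rw [norm_smul, norm_inv, norm_norm, inv_mul_cancel₀ hv']
  have hon : Orthonormal ℝ ![x, τ, u] := by
    simp [Fin.forall_fin_succ, hx, hτ, hu, hxτ, u, real_inner_smul_right, hxv, hτv]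
  have hparseval := hon.sum_sq_inner_eq_norm_sq_of_card_eq_finrank (by simp [hE]) y
  simp only [Fin.sum_univ_three, Matrix.cons_val_zero, Matrix.cons_val_one,
    Matrix.cons_val_two, Matrix.head_cons, Matrix.tail_cons] at hparseval
  rw [← hparseval, real_inner_smul_left, real_inner_comm v]
  field_simp
  ring

theorem norm_le_two_mul_abs_inner_of_finrank_eq_three (hE : finrank ℝ E = 3) {x τ v ν : E}
    (hx : ‖x‖ = 1) (hτ : ‖τ‖ = 1) (hxτ : ⟪x, τ⟫ = 0) (hxv : ⟪x, v⟫ = 0) (hτv : ⟪τ, v⟫ = 0)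
    (hν : ‖ν‖ = 1) (hντ : ⟪ν, τ⟫ = 0) (hνx : |⟪ν, x⟫| ≤ 1 / 2) :
    ‖v‖ ≤ 2 * |⟪ν, v⟫| := by
  have hsq := inner_sq_eq_of_finrank_eq_three hE hx hτ hxτ hxv hτv ν
  rw [hν, real_inner_comm ν x, real_inner_comm ν τ, hντ] at hsq
  have hνx_sq : ⟪ν, x⟫ ^ 2 ≤ 1 / 4 := by nlinarith [sq_abs ⟪ν, x⟫, abs_nonneg ⟪ν, x⟫]
  have : ‖v‖ ^ 2 ≤ (2 * |⟪ν, v⟫|) ^ 2 := by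
    rw [mul_pow, sq_abs, hsq]; nlinarith [sq_nonneg ‖v‖]
  exact (pow_le_pow_iff_left₀ (norm_nonneg v) (by positivity) two_ne_zero).mp this

end LinearAlgebra

section Curves

variable {F : Type*} [NormedAddCommGroup F] [InnerProductSpace ℝ F]

theorem inner_self_deriv_eq_zero_of_norm_eq {f : ℝ → F} {c t : ℝ} (hf : DifferentiableAt ℝ f t)
    (hc : ∀ s, ‖f s‖ = c) : ⟪f t, deriv f t⟫ = 0 := by
  have hconst : HasDerivAt (‖f ·‖ ^ 2) 0 t := by
    simpa only [hc] using hasDerivAt_const t (c ^ 2)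
  have := hf.hasDerivAt.norm_sq.unique hconst
  linarith

theorem inner_deriv_deriv_self_eq_neg_norm_sq {f : ℝ → F} {c t : ℝ} (hf : Differentiable ℝ f)
    (hf' : DifferentiableAt ℝ (deriv f) t) (hc : ∀ s, ‖f s‖ = c) :
    ⟪deriv (deriv f) t, f t⟫ = -‖deriv f t‖ ^ 2 := by
  have hconst : HasDerivAt (fun s ↦ ⟪deriv f s, f s⟫) 0 t := by
    simpa only [real_inner_comm (f _), inner_self_deriv_eq_zero_of_norm_eq (hf _) hc]
      using hasDerivAt_const t (0 : ℝ)
  have := (hf'.hasDerivAt.inner ℝ (hf t).hasDerivAt).unique hconst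
  rw [real_inner_self_eq_norm_sq] at this
  linarith

end Curves

/-- Let `γ` be a unit-speed `C²` curve lying on the unit sphere
`∂B₁ ⊂ ℝ³` and on a `C²` surface `S` with unit normal field `ν` (so `ν ∘ γ` is a
unit field orthogonal to `γ'`).  Suppose at each point the normal `ν` is `ε`-close
to being tangent to the sphere, `|⟨ν, γ(t)⟩| ≤ ε` (with `ε ≤ 1/2`), and the second
fundamental form of `S` along `γ` satisfies `|A| ≤ δ`, so that
`|⟨γ''(t), ν(t)⟩| ≤ δ`.  Then the geodesic curvature of `γ` as a curve in the unit
sphere — the norm of the tangential projection `γ'' + γ` of `γ''` — is bounded by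
`C(ε + δ)` for a universal constant `C`. -/
theorem stmt14 :
    ∃ C : ℝ, 0 < C ∧
      ∀ (ε δ : ℝ), 0 ≤ ε → ε ≤ 1/2 → 0 ≤ δ →
      ∀ (γ ν : ℝ → EuclideanSpace ℝ (Fin 3)),
        ContDiff ℝ 2 γ →
        (∀ t, ‖γ t‖ = 1) →
        (∀ t, ‖deriv γ t‖ = 1) →
        (∀ t, ‖ν t‖ = 1) →
        (∀ t, inner ℝ (ν t) (deriv γ t) = (0:ℝ)) →
        (∀ t, |(inner ℝ (ν t) (γ t) : ℝ)| ≤ ε) →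
        (∀ t, |(inner ℝ (deriv (deriv γ) t) (ν t) : ℝ)| ≤ δ) →
        ∀ t, ‖deriv (deriv γ) t + γ t‖ ≤ C * (ε + δ) := by
  refine ⟨2, two_pos, fun ε δ _ hε _ γ ν hγ hγ1 hγ'1 hν1 hνγ' hνγ hA t ↦ ?_⟩
  obtain ⟨hd1, -, hc1⟩ := contDiff_succ_iff_deriv.mp (show ContDiff ℝ (1 + 1) γ from hγ)
  have hd2 : Differentiable ℝ (deriv γ) := hc1.differentiable one_ne_zero
  have hγγ' : ⟪γ t, deriv γ t⟫ = 0 := inner_self_deriv_eq_zero_of_norm_eq (hd1 t) hγ1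
  have hγ'γ'' : ⟪deriv γ t, deriv (deriv γ) t⟫ = 0 :=
    inner_self_deriv_eq_zero_of_norm_eq (hd2 t) hγ'1
  have hγγ'' : ⟪γ t, deriv (deriv γ) t⟫ = -1 := by
    rw [real_inner_comm, inner_deriv_deriv_self_eq_neg_norm_sq hd1 (hd2 t) hγ1, hγ'1]; norm_num
  have hγv : ⟪γ t, deriv (deriv γ) t + γ t⟫ = 0 := by
    rw [inner_add_right, hγγ'', real_inner_self_eq_norm_sq, hγ1]; norm_num
  have hγ'v : ⟪deriv γ t, deriv (deriv γ) t + γ t⟫ = 0 := by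
    rw [inner_add_right, hγ'γ'', real_inner_comm, hγγ', add_zero]
  calc ‖deriv (deriv γ) t + γ t‖
      ≤ 2 * |⟪ν t, deriv (deriv γ) t + γ t⟫| :=
        norm_le_two_mul_abs_inner_of_finrank_eq_three finrank_euclideanSpace_fin (hγ1 t)
          (hγ'1 t) hγγ' hγv hγ'v (hν1 t) (hνγ' t) ((hνγ t).trans hε)
    _ ≤ 2 * (|⟪deriv (deriv γ) t, ν t⟫| + |⟪ν t, γ t⟫|) := by
      rw [inner_add_right, real_inner_comm (ν t)]; gcongr; exact abs_add_le _ _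
    _ ≤ 2 * (ε + δ) := by linarith [hA t, hνγ t]
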